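/- Let $H:\mathbb R^d\times\mathbb R^d\to\mathbb R$ and $f:\mathbb R^d\to\mathbb R$ be continuous and $\mathbb Z^d$-periodic in $y$, with $H\ge 0$, $H(0,y)=0$ for all $y$, $\max f=1$ and $\min f=-1$. Fix $\xi_1>0$, $\xi_2\in\mathbb R$, and suppose $v:\mathbb R^d\to\mathbb R$ is a $\mathbb Z^d$-periodic Lipschitz viscosity solution of $H(D_yv,y)\xi_1+f(y)\xi_2=\lambda$ in $\mathbb R^d$ for some constant $\lambda$. Then $\lambda=|\xi_2|$. -/

import Mathlib

/-!
Testing the subsolution inequality with `|y - y*|² / ε` at a maximum point `y_ε` of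
`v - |y - y*|² / ε`, the nonnegative Hamiltonian term can be dropped and gives
`f(y_ε) ξ₂ ≤ λ`; since `v` is Lipschitz, `y_ε → y*` as `ε → 0`, so `f ξ₂ ≤ λ` everywhere and
hence `|ξ₂| ≤ λ` because `f` attains both `1` and `-1`. Conversely a periodic continuous `v`
attains its minimum, where the constant test function is admissible for the supersolution
inequality; as `H(0, ·) = 0` this gives `λ ≤ f(y₀) ξ₂ ≤ |ξ₂|`.
-/

open Metric Filter Topology
open scoped NNReal

theorem LipschitzWith.exists_dist_le_isLocalMax_sub_sq_div {E : Type*}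
    [SeminormedAddCommGroup E] [ProperSpace E] {v : E → ℝ} {K : ℝ≥0} (hv : LipschitzWith K v)
    (y₀ : E) {ε : ℝ} (hε : 0 < ε) :
    ∃ y, dist y y₀ ≤ ε * K ∧ IsLocalMax (fun y => v y - ‖y - y₀‖ ^ 2 / ε) y := by
  set g : E → ℝ := fun y => v y - ‖y - y₀‖ ^ 2 / ε
  have hg : Continuous g := hv.continuous.sub (by fun_prop)
  have hr : 0 < ε * K + 1 := by positivity
  obtain ⟨y, -, hmax⟩ := (isCompact_closedBall y₀ (ε * K + 1)).exists_isMaxOn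
    ⟨y₀, mem_closedBall_self hr.le⟩ hg.continuousOn
  have hdist : dist y y₀ ≤ ε * K := by
    have hgy : v y₀ ≤ v y - dist y y₀ ^ 2 / ε := by
      simpa [g, dist_eq_norm] using hmax (mem_closedBall_self hr.le)
    have hsq : dist y y₀ ^ 2 / ε ≤ K * dist y y₀ := by
      linarith [hv.le_add_mul y y₀]
    rw [div_le_iff₀' hε] at hsq
    nlinarith [dist_nonneg (x := y) (y := y₀), mul_nonneg hε.le K.coe_nonneg]
  have hball : ball y₀ (ε * K + 1) ∈ 𝓝 y :=
    isOpen_ball.mem_nhds (mem_ball.2 (by linarith))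
  exact ⟨y, hdist, eventually_of_mem hball fun z hz => hmax (ball_subset_closedBall hz)⟩

section Viscosity

variable {E : Type*} [NormedAddCommGroup E] [InnerProductSpace ℝ E]

def IsViscositySubsolution [CompleteSpace E] (F : E → E → ℝ) (c : ℝ) (v : E → ℝ) : Prop :=
  ∀ φ : E → ℝ, ContDiff ℝ 1 φ → ∀ y₀, IsLocalMax (fun y => v y - φ y) y₀ →
    F (gradient φ y₀) y₀ ≤ c

def IsViscositySupersolution [CompleteSpace E] (F : E → E → ℝ) (c : ℝ) (v : E → ℝ) : Prop :=
  ∀ φ : E → ℝ, ContDiff ℝ 1 φ → ∀ y₀, IsLocalMin (fun y => v y - φ y) y₀ →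
    c ≤ F (gradient φ y₀) y₀

theorem IsViscositySupersolution.le_apply_zero_of_forall_le [CompleteSpace E]
    {F : E → E → ℝ} {c : ℝ} {v : E → ℝ} (hv : IsViscositySupersolution F c v)
    {y₀ : E} (hmin : ∀ y, v y₀ ≤ v y) :
    c ≤ F 0 y₀ := by
  have hloc : IsLocalMin (fun y => v y - (fun _ => (0 : ℝ)) y) y₀ :=
    Eventually.of_forall fun y => by simpa using hmin y
  simpa only [gradient_fun_const] using hv _ contDiff_const y₀ hloc

theorem IsViscositySubsolution.le_of_le_hamiltonian [ProperSpace E]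
    {F : E → E → ℝ} {c : ℝ} {v : E → ℝ} (hv : IsViscositySubsolution F c v)
    {K : ℝ≥0} (hL : LipschitzWith K v) {g : E → ℝ} (hg : Continuous g)
    (hgF : ∀ p y, g y ≤ F p y) (y : E) : g y ≤ c := by
  suffices y ∈ closure {z | g z ≤ c} by
    rwa [(isClosed_le hg continuous_const).closure_eq] at this
  refine Metric.mem_closure_iff.2 fun η hη => ?_
  set ε := η / (K + 1)
  have hε : 0 < ε := by positivity
  have hεK : ε * K < η := by
    rw [div_mul_eq_mul_div, div_lt_iff₀ (by positivity)]
    nlinarith [K.coe_nonneg]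
  obtain ⟨z, hz, hmax⟩ := hL.exists_dist_le_isLocalMax_sub_sq_div y hε
  have hφ : ContDiff ℝ 1 fun x : E => ‖x - y‖ ^ 2 / ε :=
    ((contDiff_id.sub contDiff_const).norm_sq ℝ).div_const ε
  exact ⟨z, (hgF _ z).trans (hv _ hφ z hmax), by rw [dist_comm]; linarith⟩

end Viscosity

theorem EuclideanSpace.exists_sub_intCast_mem_closedBall {d : ℕ} (y : EuclideanSpace ℝ (Fin d)) :
    ∃ z : Fin d → ℤ,
      y - (WithLp.equiv 2 (Fin d → ℝ)).symm (fun i => (z i : ℝ)) ∈ closedBall 0 √d := by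
  refine ⟨fun i => ⌊y i⌋, ?_⟩
  set x := y - (WithLp.equiv 2 (Fin d → ℝ)).symm fun i => (⌊y i⌋ : ℝ)
  have hx : ∀ i, x i = Int.fract (y i) := fun i => Int.self_sub_floor (y i)
  rw [mem_closedBall_zero_iff, EuclideanSpace.norm_eq]
  refine Real.sqrt_le_sqrt ?_
  calc ∑ i, ‖x i‖ ^ 2 ≤ ∑ _i : Fin d, (1 : ℝ) := by
        refine Finset.sum_le_sum fun i _ => ?_
        rw [hx, Real.norm_of_nonneg (Int.fract_nonneg _)]
        nlinarith [Int.fract_nonneg (y i), Int.fract_lt_one (y i)]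
    _ = d := by simp

theorem exists_forall_le_of_intPeriodic {d : ℕ} {v : EuclideanSpace ℝ (Fin d) → ℝ}
    (hv : Continuous v)
    (hper : ∀ y (z : Fin d → ℤ),
      v (y + (WithLp.equiv 2 (Fin d → ℝ)).symm fun i => (z i : ℝ)) = v y) :
    ∃ y₀, ∀ y, v y₀ ≤ v y := by
  obtain ⟨y₀, -, hmin⟩ := (isCompact_closedBall (0 : EuclideanSpace ℝ (Fin d)) √d).exists_isMinOn
    ⟨0, mem_closedBall_self (Real.sqrt_nonneg _)⟩ hv.continuousOn
  refine ⟨y₀, fun y => ?_⟩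
  obtain ⟨z, hz⟩ := y.exists_sub_intCast_mem_closedBall
  simpa only [sub_add_cancel, hper] using (hmin hz).trans_eq (hper _ z).symm

theorem stmt_14_general {d : ℕ} (ξ1 ξ2 lam : ℝ) (hξ1 : 0 < ξ1)
    (H : EuclideanSpace ℝ (Fin d) → EuclideanSpace ℝ (Fin d) → ℝ)
    (f : EuclideanSpace ℝ (Fin d) → ℝ)
    (hfcont : Continuous f)
    (hHnonneg : ∀ p y, 0 ≤ H p y) (hH0 : ∀ y, H 0 y = 0)
    (hfmax : (∃ y, f y = 1) ∧ ∀ y, f y ≤ 1)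
    (hfmin : (∃ y, f y = -1) ∧ ∀ y, -1 ≤ f y)
    (v : EuclideanSpace ℝ (Fin d) → ℝ)
    (hvlip : ∃ K, LipschitzWith K v)
    (hvper : ∀ y (z : Fin d → ℤ),
      v (y + (WithLp.equiv 2 (Fin d → ℝ)).symm fun i => (z i : ℝ)) = v y)
    (hsub : ∀ φ : EuclideanSpace ℝ (Fin d) → ℝ, ContDiff ℝ 1 φ →
      ∀ y0, IsLocalMax (fun y => v y - φ y) y0 →
        H (gradient φ y0) y0 * ξ1 + f y0 * ξ2 ≤ lam)
    (hsuper : ∀ φ : EuclideanSpace ℝ (Fin d) → ℝ, ContDiff ℝ 1 φ →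
      ∀ y0, IsLocalMin (fun y => v y - φ y) y0 →
        lam ≤ H (gradient φ y0) y0 * ξ1 + f y0 * ξ2) :
    lam = |ξ2| := by
  obtain ⟨K, hK⟩ := hvlip
  have hvsub : IsViscositySubsolution (fun p y => H p y * ξ1 + f y * ξ2) lam v := hsub
  have hvsuper : IsViscositySupersolution (fun p y => H p y * ξ1 + f y * ξ2) lam v := hsuper
  have hlower : ∀ y, f y * ξ2 ≤ lam :=
    hvsub.le_of_le_hamiltonian hK (hfcont.mul continuous_const)
      fun p y => le_add_of_nonneg_left (mul_nonneg (hHnonneg p y) hξ1.le)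
  obtain ⟨y₀, hy₀⟩ := exists_forall_le_of_intPeriodic hK.continuous hvper
  have hupper : lam ≤ f y₀ * ξ2 := by
    simpa only [hH0, zero_mul, zero_add] using hvsuper.le_apply_zero_of_forall_le hy₀
  obtain ⟨⟨y₁, hy₁⟩, hf_le⟩ := hfmax
  obtain ⟨⟨y₂, hy₂⟩, hle_f⟩ := hfmin
  have habs_le : |ξ2| ≤ lam :=
    abs_le'.2 ⟨by simpa [hy₁] using hlower y₁, by simpa [hy₂] using hlower y₂⟩
  have hf_mul_le : f y₀ * ξ2 ≤ |ξ2| := by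
    refine (le_abs_self _).trans ?_
    rw [abs_mul]
    exact mul_le_of_le_one_left (abs_nonneg _) (abs_le.2 ⟨hle_f y₀, hf_le y₀⟩)
  exact le_antisymm (hupper.trans hf_mul_le) habs_le

/-- For `H ≥ 0` continuous, `ℤ^d`-periodic in `y`, with `H(0,y) = 0`,
`f` continuous periodic with `max f = 1`, `min f = -1`, and `ξ1 > 0`: if a periodic
Lipschitz function `v` is a viscosity solution of `H(Dv,y)ξ1 + f(y)ξ2 = λ`, then
`λ = |ξ2|`. -/
theorem stmt_14 {d : ℕ} (ξ1 ξ2 lam : ℝ) (hξ1 : 0 < ξ1)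
    (H : EuclideanSpace ℝ (Fin d) → EuclideanSpace ℝ (Fin d) → ℝ)
    (f : EuclideanSpace ℝ (Fin d) → ℝ)
    (hHcont : Continuous fun pr : EuclideanSpace ℝ (Fin d) × EuclideanSpace ℝ (Fin d) =>
      H pr.1 pr.2)
    (hfcont : Continuous f)
    (hHper : ∀ p y (z : Fin d → ℤ),
      H p (y + (WithLp.equiv 2 (Fin d → ℝ)).symm fun i => (z i : ℝ)) = H p y)
    (hfper : ∀ y (z : Fin d → ℤ),
      f (y + (WithLp.equiv 2 (Fin d → ℝ)).symm fun i => (z i : ℝ)) = f y)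
    (hHnonneg : ∀ p y, 0 ≤ H p y) (hH0 : ∀ y, H 0 y = 0)
    (hfmax : (∃ y, f y = 1) ∧ ∀ y, f y ≤ 1)
    (hfmin : (∃ y, f y = -1) ∧ ∀ y, -1 ≤ f y)
    (v : EuclideanSpace ℝ (Fin d) → ℝ)
    (hvlip : ∃ K, LipschitzWith K v)
    (hvper : ∀ y (z : Fin d → ℤ),
      v (y + (WithLp.equiv 2 (Fin d → ℝ)).symm fun i => (z i : ℝ)) = v y)
    (hsub : ∀ φ : EuclideanSpace ℝ (Fin d) → ℝ, ContDiff ℝ 1 φ →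
      ∀ y0, IsLocalMax (fun y => v y - φ y) y0 →
        H (gradient φ y0) y0 * ξ1 + f y0 * ξ2 ≤ lam)
    (hsuper : ∀ φ : EuclideanSpace ℝ (Fin d) → ℝ, ContDiff ℝ 1 φ →
      ∀ y0, IsLocalMin (fun y => v y - φ y) y0 →
        lam ≤ H (gradient φ y0) y0 * ξ1 + f y0 * ξ2) :
    lam = |ξ2| :=
  stmt_14_general ξ1 ξ2 lam hξ1 H f hfcont hHnonneg hH0 hfmax hfmin v hvlip hvper hsub hsuper
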